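/- Let Γ be a maximal SKHM-consistent set of L_Khm formulas and M^c_Γ its canonical model, and let σ = a1⋯an ∈ Σ_Γ* be a non-empty sequence where each a_i is of the form ⟨ψ_i,⊥,φ_i⟩ or ⟨χ_i^{ψ_i},φ_i⟩. If for every ψ-state w ∈ S^c: (1) σ is strongly executable at w, and (2) w →σ_j t' implies χ ∈ L(t') for all 1 ≤ j < n, then Khm(ψ,χ,φ_i) ∈ Γ for all 1 ≤ i ≤ n. -/
import Mathlib


/-- Formulas of the language L_Khm over a countable set of proposition
letters (represented by `ℕ`): `φ ::= p | ¬φ | (φ∧φ) | Khm(φ,φ,φ)`. -/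
inductive Formula : Type
  | atom : ℕ → Formula
  | neg : Formula → Formula
  | and : Formula → Formula → Formula
  | khm : Formula → Formula → Formula → Formula
deriving DecidableEq

namespace Formula

/-- The falsum `⊥`, as a standard abbreviation. -/
def falsum : Formula := and (atom 0) (neg (atom 0))

/-- The verum `⊤`. -/
def top : Formula := neg falsum

/-- Material implication, as a standard abbreviation. -/
def imp (φ ψ : Formula) : Formula := neg (and φ (neg ψ))

/-- Biimplication. -/
def biimp (φ ψ : Formula) : Formula := and (imp φ ψ) (imp ψ φ)

/-- The universal modality `Uφ := Khm(¬φ, ⊤, ⊥)`. -/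
def U (φ : Formula) : Formula := khm (neg φ) top falsum

/-- Uniform substitution of formulas for proposition letters. -/
def subst (f : ℕ → Formula) : Formula → Formula
  | atom n => f n
  | neg φ => neg (subst f φ)
  | and φ ψ => and (subst f φ) (subst f ψ)
  | khm φ χ ψ => khm (subst f φ) (subst f χ) (subst f ψ)

end Formula

/-- A model (ability map): a labelled transition system over action symbols `Act`,
with a set of states `S`, transitions `R`, and valuation `V`. -/
structure Model (Act : Type) where
  S : Type
  R : Act → S → S → Prop
  V : S → Set ℕ

namespace Model

variable {Act : Type} (M : Model Act)

/-- `M.bigStep σ s t` : `s →σ t`, i.e. `t` is reachable from `s` by executing the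
sequence of actions `σ`. -/
def bigStep : List Act → M.S → M.S → Prop
  | [], s, t => s = t
  | a :: σ, s, t => ∃ u, M.R a s u ∧ bigStep σ u t

/-- `σ = a₁⋯aₙ` is strongly executable at `s` if for each `0 ≤ k < n`,
`s →σ_k t` implies `t` has at least one `a_{k+1}`-successor. -/
def stronglyExec (σ : List Act) (s : M.S) : Prop :=
  ∀ k (h : k < σ.length) (t : M.S),
    M.bigStep (σ.take k) s t → ∃ u, M.R (σ.get ⟨k, h⟩) t u

/-- Satisfaction. `M.sat (Formula.khm ψ χ φ) s` holds iff there is `σ ∈ Act*`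
such that for every `s'` with `M, s' ⊨ ψ`: `σ` is strongly `χ`-executable at `s'`
(strongly executable, and all strictly intermediate states satisfy `χ`) and
`M, t ⊨ φ` for all `t` with `s' →σ t`. -/
def sat : Formula → M.S → Prop
  | .atom n, s => n ∈ M.V s
  | .neg φ, s => ¬ sat φ s
  | .and φ ψ, s => sat φ s ∧ sat ψ s
  | .khm ψ χ φ, s => ∃ σ : List Act, ∀ s', sat ψ s' →
      (M.stronglyExec σ s' ∧
        ∀ k, 0 < k → k < σ.length → ∀ t, M.bigStep (σ.take k) s' t → sat χ t) ∧
      (∀ t, M.bigStep σ s' t → sat φ t)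

end Model

/-- A formula is valid (w.r.t. the class of all models over action symbols `Act`)
if it is satisfied at every state of every model. -/
def Valid (Act : Type) (φ : Formula) : Prop :=
  ∀ M : Model Act, Nonempty M.S → ∀ s : M.S, M.sat φ s

/-- Boolean evaluation treating proposition letters and `Khm`-formulas as atoms. -/
def evalB (v : Formula → Bool) : Formula → Bool
  | .atom n => v (.atom n)
  | .neg φ => ! evalB v φ
  | .and φ ψ => evalB v φ && evalB v ψ
  | .khm ψ χ φ => v (.khm ψ χ φ)

/-- Propositional tautologies. -/
def Tautology (φ : Formula) : Prop := ∀ v, evalB v φ = true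

open Formula in
/-- Derivability in the proof system SKHM. -/
inductive Deriv : Formula → Prop
  | taut {φ} : Tautology φ → Deriv φ
  | distU (p q) : Deriv (((U p).and (U (p.imp q))).imp (U q))
  | tU (p) : Deriv ((U p).imp p)
  | fourKhmU (p o q) : Deriv ((khm p o q).imp (U (khm p o q)))
  | fiveKhmU (p o q) : Deriv ((neg (khm p o q)).imp (U (neg (khm p o q))))
  | empKhm (p q) : Deriv ((U (p.imp q)).imp (khm p falsum q))
  | compKhm (p o r q) :
      Deriv ((((khm p o r).and (khm r o q)).and (U (r.imp o))).imp (khm p o q))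
  | oneKhm (p o q) :
      Deriv (((khm p o q).and (neg (khm p falsum q))).imp (khm p falsum o))
  | uKhm (p' p o o' q q') :
      Deriv (((((U (p'.imp p)).and (U (o.imp o'))).and (U (q.imp q'))).and
        (khm p o q)).imp (khm p' o' q'))
  | mp {φ ψ} : Deriv (φ.imp ψ) → Deriv φ → Deriv ψ
  | necU {φ} : Deriv φ → Deriv (U φ)
  | sub {φ} (f : ℕ → Formula) : Deriv φ → Deriv (φ.subst f)

/-- Conjunction of a finite list of formulas. -/
def conjList : List Formula → Formula
  | [] => Formula.top
  | φ :: L => φ.and (conjList L)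

/-- A set of formulas is SKHM-consistent if no finite conjunction of its
members has its negation derivable in SKHM. -/
def ConsistentSet (Γ : Set Formula) : Prop :=
  ∀ L : List Formula, (∀ φ ∈ L, φ ∈ Γ) → ¬ Deriv (Formula.neg (conjList L))

/-- Maximal SKHM-consistent set. -/
def MCS (Γ : Set Formula) : Prop :=
  ConsistentSet Γ ∧ ∀ Δ, ConsistentSet Δ → Γ ⊆ Δ → Δ = Γ

/-- `Δ|Khm`: the positive `Khm`-formulas of `Δ`. -/
def khmPart (Δ : Set Formula) : Set Formula :=
  {θ ∈ Δ | ∃ ψ χ φ, θ = Formula.khm ψ χ φ}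

/-- `Φ_Γ`: the set of all MCSs `Δ` with `Δ|Khm = Γ|Khm`. -/
def PhiGamma (Γ : Set Formula) : Set (Set Formula) :=
  {Δ | MCS Δ ∧ khmPart Δ = khmPart Γ}

/-- Canonical action symbols: `⟨ψ,⊥,φ⟩` (`one ψ φ`) and `⟨χ^ψ,φ⟩` (`two χ ψ φ`). -/
inductive CanAct : Type
  | one : Formula → Formula → CanAct
  | two : Formula → Formula → Formula → CanAct
deriving DecidableEq

/-- The formula in the last component of a canonical action. -/
def CanAct.post : CanAct → Formula
  | .one _ φ => φ
  | .two _ _ φ => φ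

/-- The canonical action set
`Σ_Γ = {⟨ψ,⊥,φ⟩ : Khm(ψ,⊥,φ) ∈ Γ} ∪ {⟨χ^ψ,φ⟩ : Khm(ψ,χ,φ) ∈ Γ, ¬Khm(ψ,⊥,φ) ∈ Γ}`. -/
def SigmaGamma (Γ : Set Formula) : Set CanAct :=
  {a | (∃ ψ φ, a = CanAct.one ψ φ ∧ Formula.khm ψ Formula.falsum φ ∈ Γ) ∨
       (∃ χ ψ φ, a = CanAct.two χ ψ φ ∧ Formula.khm ψ χ φ ∈ Γ ∧
          Formula.neg (Formula.khm ψ Formula.falsum φ) ∈ Γ)}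

/-- Canonical states: pairs `(Δ, χ^ψ)` (the marker `χ^ψ` is the pair `(χ, ψ)`)
with `χ ∈ Δ ∈ Φ_Γ`, and either `⟨χ^ψ,φ⟩ ∈ Σ_Γ` for some `φ`, or `⟨ψ,⊥,χ⟩ ∈ Σ_Γ`. -/
def CanStates (Γ : Set Formula) : Set (Set Formula × Formula × Formula) :=
  {w | w.1 ∈ PhiGamma Γ ∧ w.2.1 ∈ w.1 ∧
       ((∃ φ, CanAct.two w.2.1 w.2.2 φ ∈ SigmaGamma Γ) ∨
        CanAct.one w.2.2 w.2.1 ∈ SigmaGamma Γ)}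

/-- The canonical model `M^c_Γ` over the action set `Σ_Γ`. For a canonical state
`w`, `L(w) = w.1.1` and `R(w) = w.1.2`. -/
def canonicalModel (Γ : Set Formula) : Model {a : CanAct // a ∈ SigmaGamma Γ} where
  S := {w : Set Formula × Formula × Formula // w ∈ CanStates Γ}
  R a w w' :=
    match a.1 with
    | CanAct.one ψ φ => ψ ∈ w.1.1 ∧ w'.1.2 = (φ, ψ)
    | CanAct.two χ ψ φ => w.1.2 = (χ, ψ) ∧ φ ∈ w'.1.1
  V w := {n | Formula.atom n ∈ w.1.1}

section Toolkit

open Formula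

/-! ### Boolean evaluation helpers -/

lemma evalB_neg (v : Formula → Bool) (A : Formula) :
    evalB v (A.neg) = !(evalB v A) := rfl

lemma evalB_and' (v : Formula → Bool) (A B : Formula) :
    evalB v (A.and B) = (evalB v A && evalB v B) := rfl

lemma evalB_falsum (v : Formula → Bool) : evalB v Formula.falsum = false := by
  simp [Formula.falsum, evalB]

lemma evalB_top (v : Formula → Bool) : evalB v Formula.top = true := by
  simp [Formula.top, evalB_neg, evalB_falsum]

lemma evalB_imp_true {v : Formula → Bool} {A B : Formula} :
    evalB v (A.imp B) = true ↔ (evalB v A = true → evalB v B = true) := by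
  simp [Formula.imp, evalB]
  cases evalB v A <;> cases evalB v B <;> simp

lemma evalB_and_true {v : Formula → Bool} {A B : Formula} :
    evalB v (A.and B) = true ↔ (evalB v A = true ∧ evalB v B = true) := by
  simp [evalB]

lemma evalB_neg_true {v : Formula → Bool} {A : Formula} :
    evalB v (A.neg) = true ↔ ¬ (evalB v A = true) := by
  simp [evalB]

lemma evalB_conj (v : Formula → Bool) :
    ∀ L : List Formula, evalB v (conjList L) = true ↔ ∀ A ∈ L, evalB v A = true
  | [] => by simp [conjList, evalB_top]
  | A :: L => by
      simp [conjList, evalB_and_true, evalB_conj v L]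

/-! ### Basic derivability helpers -/

lemma deriv_mp2 {A B C : Formula} (h : Deriv (A.imp (B.imp C)))
    (hA : Deriv A) (hB : Deriv B) : Deriv C :=
  Deriv.mp (Deriv.mp h hA) hB

lemma deriv_imp_trans {A B C : Formula} (h1 : Deriv (A.imp B))
    (h2 : Deriv (B.imp C)) : Deriv (A.imp C) := by
  have t : Tautology ((A.imp B).imp ((B.imp C).imp (A.imp C))) := by
    intro v
    simp only [evalB_imp_true]
    tauto
  exact deriv_mp2 (Deriv.taut t) h1 h2

lemma deriv_and_intro {A B : Formula} (hA : Deriv A) (hB : Deriv B) :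
    Deriv (A.and B) := by
  have t : Tautology (A.imp (B.imp (A.and B))) := by
    intro v; simp only [evalB_imp_true, evalB_and_true]; tauto
  exact deriv_mp2 (Deriv.taut t) hA hB

lemma deriv_conj_imp_of_subset {L L' : List Formula} (h : ∀ A ∈ L, A ∈ L') :
    Deriv ((conjList L').imp (conjList L)) := by
  apply Deriv.taut
  intro v
  simp only [evalB_imp_true, evalB_conj]
  intro h' A hA
  exact h' A (h A hA)

lemma deriv_neg_conj_of_subset {L L' : List Formula} (h : ∀ A ∈ L, A ∈ L')
    (hd : Deriv ((conjList L).neg)) : Deriv ((conjList L').neg) := by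
  have t : Tautology (((conjList L').imp (conjList L)).imp
      (((conjList L).neg).imp ((conjList L').neg))) := by
    intro v; simp only [evalB_imp_true, evalB_neg_true]; tauto
  exact deriv_mp2 (Deriv.taut t) (deriv_conj_imp_of_subset h) hd

/-! ### MCS basics -/

lemma mcs_consistent {Γ : Set Formula} (hΓ : MCS Γ) : ConsistentSet Γ := hΓ.1

lemma inconsistent_insert {Γ : Set Formula} {A : Formula}
    (h : ¬ ConsistentSet (insert A Γ)) :
    ∃ L : List Formula, (∀ B ∈ L, B ∈ Γ) ∧ Deriv ((conjList (A :: L)).neg) := by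
  simp only [ConsistentSet, not_forall, not_not] at h
  obtain ⟨L, hL, hd⟩ := h
  classical
  refine ⟨L.filter (fun B => B ≠ A), ?_, ?_⟩
  · intro B hB
    simp only [List.mem_filter, decide_eq_true_eq] at hB
    rcases hL B hB.1 with h | h
    · exact absurd h hB.2
    · exact h
  · apply deriv_neg_conj_of_subset (L := L) _ hd
    intro B hB
    by_cases hBA : B = A
    · simp [hBA]
    · simp [List.mem_filter, hB, hBA]

lemma mcs_mem_of_deriv {Γ : Set Formula} (hΓ : MCS Γ) {A : Formula}
    (hd : Deriv A) : A ∈ Γ := by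
  have hcons : ConsistentSet (insert A Γ) := by
    by_contra hc
    obtain ⟨L, hL, hD⟩ := inconsistent_insert hc
    have t : Tautology (A.imp (((conjList (A :: L)).neg).imp
        ((conjList L).neg))) := by
      intro v
      simp only [evalB_imp_true, evalB_neg_true, conjList, evalB_and_true]
      tauto
    exact hΓ.1 L hL (deriv_mp2 (Deriv.taut t) hd hD)
  have := hΓ.2 _ hcons (Set.subset_insert A Γ)
  rw [← this]; exact Set.mem_insert A Γ

lemma mcs_neg_complete {Γ : Set Formula} (hΓ : MCS Γ) {A : Formula}
    (hA : A ∉ Γ) : A.neg ∈ Γ := by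
  by_contra hnA
  have h1 : ¬ ConsistentSet (insert A Γ) := by
    intro hc
    exact hA (by rw [← hΓ.2 _ hc (Set.subset_insert A Γ)]; exact Set.mem_insert _ _)
  have h2 : ¬ ConsistentSet (insert A.neg Γ) := by
    intro hc
    exact hnA (by rw [← hΓ.2 _ hc (Set.subset_insert _ Γ)]; exact Set.mem_insert _ _)
  obtain ⟨L1, hL1, hD1⟩ := inconsistent_insert h1
  obtain ⟨L2, hL2, hD2⟩ := inconsistent_insert h2
  have e1 : Deriv ((conjList (L1 ++ L2)).imp (conjList L1)) :=
    deriv_conj_imp_of_subset (fun B hB => List.mem_append.2 (Or.inl hB))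
  have e2 : Deriv ((conjList (L1 ++ L2)).imp (conjList L2)) :=
    deriv_conj_imp_of_subset (fun B hB => List.mem_append.2 (Or.inr hB))
  have t : Tautology (((A.and (conjList L1)).neg).imp
      (((A.neg.and (conjList L2)).neg).imp
        (((conjList (L1 ++ L2)).imp (conjList L1)).imp
          (((conjList (L1 ++ L2)).imp (conjList L2)).imp
            ((conjList (L1 ++ L2)).neg))))) := by
    intro v
    simp only [evalB_imp_true, evalB_neg_true, evalB_and_true]
    tauto
  have hD1' : Deriv ((A.and (conjList L1)).neg) := hD1
  have hD2' : Deriv ((A.neg.and (conjList L2)).neg) := hD2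
  have : Deriv ((conjList (L1 ++ L2)).neg) :=
    Deriv.mp (Deriv.mp (deriv_mp2 (Deriv.taut t) hD1' hD2') e1) e2
  refine hΓ.1 (L1 ++ L2) ?_ this
  intro B hB
  rcases List.mem_append.1 hB with h | h
  · exact hL1 B h
  · exact hL2 B h

lemma mcs_not_both {Γ : Set Formula} (hΓ : MCS Γ) {A : Formula}
    (h1 : A ∈ Γ) (h2 : A.neg ∈ Γ) : False := by
  refine hΓ.1 [A, A.neg] ?_ ?_
  · intro B hB
    simp only [List.mem_cons, List.not_mem_nil, or_false] at hB
    rcases hB with rfl | rfl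
    · exact h1
    · exact h2
  · apply Deriv.taut
    intro v
    simp only [conjList, evalB_neg_true, evalB_and_true]
    tauto

lemma mcs_mp {Γ : Set Formula} (hΓ : MCS Γ) {A B : Formula}
    (hAB : A.imp B ∈ Γ) (hA : A ∈ Γ) : B ∈ Γ := by
  by_contra hB
  have hnB := mcs_neg_complete hΓ hB
  refine hΓ.1 [A.imp B, A, B.neg] ?_ ?_
  · intro C hC
    simp only [List.mem_cons, List.not_mem_nil, or_false] at hC
    rcases hC with rfl | rfl | rfl
    · exact hAB
    · exact hA
    · exact hnB
  · apply Deriv.taut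
    intro v
    simp only [conjList, evalB_neg_true, evalB_and_true, evalB_imp_true,
      evalB_top]
    tauto

lemma mcs_mp_deriv {Γ : Set Formula} (hΓ : MCS Γ) {A B : Formula}
    (hAB : Deriv (A.imp B)) (hA : A ∈ Γ) : B ∈ Γ :=
  mcs_mp hΓ (mcs_mem_of_deriv hΓ hAB) hA

lemma mcs_and_intro {Γ : Set Formula} (hΓ : MCS Γ) {A B : Formula}
    (hA : A ∈ Γ) (hB : B ∈ Γ) : A.and B ∈ Γ := by
  have t : Deriv (A.imp (B.imp (A.and B))) := by
    apply Deriv.taut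
    intro v; simp only [evalB_imp_true, evalB_and_true]; tauto
  exact mcs_mp hΓ (mcs_mp_deriv hΓ t hA) hB

lemma mcs_imp_intro {Γ : Set Formula} (hΓ : MCS Γ) {A B : Formula}
    (h : A ∈ Γ → B ∈ Γ) : A.imp B ∈ Γ := by
  by_cases hA : A ∈ Γ
  · refine mcs_mp_deriv hΓ ?_ (h hA)
    apply Deriv.taut
    intro v; simp only [evalB_imp_true]; tauto
  · refine mcs_mp_deriv hΓ ?_ (mcs_neg_complete hΓ hA)
    apply Deriv.taut
    intro v; simp only [evalB_imp_true, evalB_neg_true]; tauto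

lemma mcs_conj_mem {Γ : Set Formula} (hΓ : MCS Γ) :
    ∀ {L : List Formula}, (∀ A ∈ L, A ∈ Γ) → conjList L ∈ Γ
  | [], _ => mcs_mem_of_deriv hΓ (Deriv.taut (fun v => evalB_top v))
  | A :: L, h => by
      exact mcs_and_intro hΓ (h A (by simp))
        (mcs_conj_mem hΓ (fun B hB => h B (by simp [hB])))

/-! ### Lindenbaum -/

lemma chain_bound {c : Set (Set Formula)}
    (hchain : IsChain (· ⊆ ·) c) (hne : c.Nonempty) :
    ∀ L : List Formula, (∀ A ∈ L, A ∈ ⋃₀ c) → ∃ Δ ∈ c, ∀ A ∈ L, A ∈ Δ := by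
  intro L
  induction L with
  | nil => exact fun _ => ⟨hne.choose, hne.choose_spec, by simp⟩
  | cons A L ih =>
      intro hL
      obtain ⟨Δ, hΔc, hΔ⟩ := ih (fun B hB => hL B (by simp [hB]))
      obtain ⟨Δ', hΔ'c, hAΔ'⟩ := hL A (by simp)
      by_cases he : Δ = Δ'
      · exact ⟨Δ', hΔ'c, fun B hB => by
          rcases List.mem_cons.1 hB with rfl | hB
          · exact hAΔ'
          · exact he ▸ hΔ B hB⟩
      rcases hchain hΔc hΔ'c he with h | h
      · exact ⟨Δ', hΔ'c, fun B hB => by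
          rcases List.mem_cons.1 hB with rfl | hB
          · exact hAΔ'
          · exact h (hΔ B hB)⟩
      · exact ⟨Δ, hΔc, fun B hB => by
          rcases List.mem_cons.1 hB with rfl | hB
          · exact h hAΔ'
          · exact hΔ B hB⟩

lemma consistent_sUnion_chain {c : Set (Set Formula)}
    (hchain : IsChain (· ⊆ ·) c) (hne : c.Nonempty)
    (hcons : ∀ Δ ∈ c, ConsistentSet Δ) : ConsistentSet (⋃₀ c) := by
  intro L hL hD
  obtain ⟨Δ, hΔc, hΔ⟩ := chain_bound hchain hne L hL
  exact hcons Δ hΔc L hΔ hD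

lemma lindenbaum {Γ0 : Set Formula} (h : ConsistentSet Γ0) :
    ∃ Γ, MCS Γ ∧ Γ0 ⊆ Γ := by
  obtain ⟨m, hsub, hmax⟩ := zorn_subset_nonempty {Δ | ConsistentSet Δ}
    (fun c hc hchain hne =>
      ⟨⋃₀ c, consistent_sUnion_chain hchain hne (fun Δ hΔ => hc hΔ),
        fun Δ hΔ => Set.subset_sUnion_of_mem hΔ⟩) Γ0 h
  refine ⟨m, ⟨hmax.1, ?_⟩, hsub⟩
  intro Δ hΔ hmΔ
  exact Set.Subset.antisymm (hmax.2 hΔ hmΔ) hmΔ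

/-! ### U logic -/

open Formula in
lemma deriv_U_mono {A B : Formula} (h : Deriv (A.imp B)) :
    Deriv ((U A).imp (U B)) := by
  have hd := Deriv.distU A B
  have hU : Deriv (U (A.imp B)) := Deriv.necU h
  have t : Tautology (((((U A).and (U (A.imp B))).imp (U B))).imp
      ((U (A.imp B)).imp ((U A).imp (U B)))) := by
    intro v
    simp only [evalB_imp_true, evalB_and_true]
    tauto
  exact deriv_mp2 (Deriv.taut t) hd hU

open Formula in
lemma deriv_U_and {A B : Formula} :
    Deriv (((U A).and (U B)).imp (U (A.and B))) := by
  have h1 : Deriv ((U A).imp (U (B.imp (A.and B)))) := by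
    apply deriv_U_mono
    apply Deriv.taut
    intro v; simp only [evalB_imp_true, evalB_and_true]; tauto
  have h2 := Deriv.distU B (A.and B)
  have t : Tautology (((U A).imp (U (B.imp (A.and B)))).imp
      (((((U B).and (U (B.imp (A.and B)))).imp (U (A.and B)))).imp
        (((U A).and (U B)).imp (U (A.and B))))) := by
    intro v
    simp only [evalB_imp_true, evalB_and_true]
    tauto
  exact deriv_mp2 (Deriv.taut t) h1 h2

open Formula in
lemma deriv_conj_map_U :
    ∀ L : List Formula, Deriv ((conjList (L.map U)).imp (U (conjList L)))
  | [] => by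
      have h : Deriv (U (conjList [])) := Deriv.necU (Deriv.taut fun v => evalB_top v)
      have t : Tautology ((U (conjList [])).imp
          ((conjList (([] : List Formula).map U)).imp (U (conjList [])))) := by
        intro v; simp only [evalB_imp_true]; tauto
      exact Deriv.mp (Deriv.taut t) h
  | A :: L => by
      have ih := deriv_conj_map_U L
      have hUand := deriv_U_and (A := A) (B := conjList L)
      -- goal : (U A).and (conjList (L.map U)) → U (A.and conjList L)
      have t : Tautology (((conjList (L.map U)).imp (U (conjList L))).imp
          (((((U A).and (U (conjList L))).imp (U (A.and (conjList L))))).imp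
            (((U A).and (conjList (L.map U))).imp (U (A.and (conjList L)))))) := by
        intro v
        simp only [evalB_imp_true, evalB_and_true]
        tauto
      exact deriv_mp2 (Deriv.taut t) ih hUand

open Formula in
lemma mcs_U_of_deriv {Γ : Set Formula} (hΓ : MCS Γ) {A : Formula}
    (h : Deriv A) : U A ∈ Γ :=
  mcs_mem_of_deriv hΓ (Deriv.necU h)

/-! ### Φ_Γ lemmas -/

open Formula in
lemma self_mem_PhiGamma {Γ : Set Formula} (hΓ : MCS Γ) : Γ ∈ PhiGamma Γ :=
  ⟨hΓ, rfl⟩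

open Formula in
lemma phi_mcs {Γ Δ : Set Formula} (hΔ : Δ ∈ PhiGamma Γ) : MCS Δ := hΔ.1

open Formula in
lemma mcs_U_elim {Γ Δ : Set Formula} (hΓ : MCS Γ) (hΔ : Δ ∈ PhiGamma Γ)
    {A : Formula} (h : U A ∈ Γ) : A ∈ Δ := by
  have hkhm : U A ∈ khmPart Γ := ⟨h, _, _, _, rfl⟩
  have : U A ∈ khmPart Δ := by rw [hΔ.2]; exact hkhm
  exact mcs_mp_deriv hΔ.1 (Deriv.tU A) this.1

open Formula in
lemma mcs_U_intro {Γ : Set Formula} (hΓ : MCS Γ) {A : Formula}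
    (h : ∀ Δ ∈ PhiGamma Γ, A ∈ Δ) : U A ∈ Γ := by
  by_contra hU
  -- the set T is consistent
  classical
  set T : Set Formula := insert A.neg
    ({θ ∈ Γ | ∃ a b c, θ = khm a b c} ∪
     {θ | ∃ a b c, θ = (khm a b c).neg ∧ khm a b c ∉ Γ}) with hT
  have hTcons : ConsistentSet T := by
    intro L hL hD
    -- L0 : the part of L in Γ-khm-info
    set L0 : List Formula := L.filter (fun B => B ≠ A.neg) with hL0
    have hsub : ∀ B ∈ L, B ∈ A.neg :: L0 := by
      intro B hB
      by_cases hBA : B = A.neg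
      · simp [hBA]
      · simp [hL0, List.mem_filter, hB, hBA]
    have hD0 : Deriv ((conjList (A.neg :: L0)).neg) :=
      deriv_neg_conj_of_subset hsub hD
    -- Deriv (conjList L0 → A)
    have hImp : Deriv ((conjList L0).imp A) := by
      have t : Tautology (((A.neg.and (conjList L0)).neg).imp
          ((conjList L0).imp A)) := by
        intro v
        simp only [evalB_imp_true, evalB_neg_true, evalB_and_true]
        tauto
      exact Deriv.mp (Deriv.taut t) hD0
    have hUImp : Deriv ((U (conjList L0)).imp (U A)) := deriv_U_mono hImp
    -- every member of L0 has U-version in Γ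
    have hU0 : ∀ B ∈ L0, U B ∈ Γ := by
      intro B hB
      have hBL : B ∈ L ∧ B ≠ A.neg := by
        have := List.mem_filter.1 hB
        exact ⟨this.1, by simpa using this.2⟩
      have hBT : B ∈ T := hL B hBL.1
      rcases hBT with rfl | hBT
      · exact absurd rfl hBL.2
      rcases hBT with ⟨hBΓ, a, b, c, rfl⟩ | ⟨a, b, c, rfl, hout⟩
      · exact mcs_mp_deriv hΓ (Deriv.fourKhmU a b c) hBΓ
      · exact mcs_mp_deriv hΓ (Deriv.fiveKhmU a b c) (mcs_neg_complete hΓ hout)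
    have hconjU : conjList (L0.map U) ∈ Γ := by
      apply mcs_conj_mem hΓ
      intro B hB
      obtain ⟨C, hC, rfl⟩ := List.mem_map.1 hB
      exact hU0 C hC
    have hUA : U A ∈ Γ :=
      mcs_mp_deriv hΓ hUImp
        (mcs_mp_deriv hΓ (deriv_conj_map_U L0) hconjU)
    exact hU hUA
  obtain ⟨Δ, hΔmcs, hTΔ⟩ := lindenbaum hTcons
  have hΔΦ : Δ ∈ PhiGamma Γ := by
    refine ⟨hΔmcs, ?_⟩
    ext θ
    constructor
    · rintro ⟨hθΔ, a, b, c, rfl⟩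
      by_cases hθΓ : khm a b c ∈ Γ
      · exact ⟨hθΓ, a, b, c, rfl⟩
      · exact absurd hθΔ fun hθΔ =>
          mcs_not_both hΔmcs hθΔ (hTΔ (Or.inr (Or.inr ⟨a, b, c, rfl, hθΓ⟩)))
    · rintro ⟨hθΓ, a, b, c, rfl⟩
      exact ⟨hTΔ (Or.inr (Or.inl ⟨hθΓ, a, b, c, rfl⟩)), a, b, c, rfl⟩
  have hAΔ : A ∈ Δ := h Δ hΔΦ
  exact mcs_not_both hΔmcs hAΔ (hTΔ (Or.inl rfl))

open Formula in
lemma mcs_U_imp_intro {Γ : Set Formula} (hΓ : MCS Γ) {P Q : Formula}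
    (h : ∀ Δ ∈ PhiGamma Γ, P ∈ Δ → Q ∈ Δ) : U (P.imp Q) ∈ Γ :=
  mcs_U_intro hΓ (fun Δ hΔ => mcs_imp_intro hΔ.1 (h Δ hΔ))

/-! ### Khm helpers at an MCS -/

open Formula in
lemma mcs_khm_weaken {Γ : Set Formula} (hΓ : MCS Γ) {p' p o o' q q' : Formula}
    (h1 : U (p'.imp p) ∈ Γ) (h2 : U (o.imp o') ∈ Γ) (h3 : U (q.imp q') ∈ Γ)
    (h4 : khm p o q ∈ Γ) : khm p' o' q' ∈ Γ :=
  mcs_mp_deriv hΓ (Deriv.uKhm p' p o o' q q')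
    (mcs_and_intro hΓ (mcs_and_intro hΓ (mcs_and_intro hΓ h1 h2) h3) h4)

open Formula in
lemma mcs_khm_comp {Γ : Set Formula} (hΓ : MCS Γ) {p o r q : Formula}
    (h1 : khm p o r ∈ Γ) (h2 : khm r o q ∈ Γ) (h3 : U (r.imp o) ∈ Γ) :
    khm p o q ∈ Γ :=
  mcs_mp_deriv hΓ (Deriv.compKhm p o r q)
    (mcs_and_intro hΓ (mcs_and_intro hΓ h1 h2) h3)

open Formula in
lemma mcs_U_refl {Γ : Set Formula} (hΓ : MCS Γ) (p : Formula) :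
    U (p.imp p) ∈ Γ :=
  mcs_U_of_deriv hΓ (Deriv.taut (by
    intro v; simp only [evalB_imp_true]; tauto))

open Formula in
lemma mcs_U_falsum_imp {Γ : Set Formula} (hΓ : MCS Γ) (p : Formula) :
    U (Formula.falsum.imp p) ∈ Γ :=
  mcs_U_of_deriv hΓ (Deriv.taut (by
    intro v; simp only [evalB_imp_true, evalB_falsum]; tauto))

open Formula in
lemma mcs_khm_chi {Γ : Set Formula} (hΓ : MCS Γ) {p q : Formula} (χ : Formula)
    (h : khm p Formula.falsum q ∈ Γ) : khm p χ q ∈ Γ :=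
  mcs_khm_weaken hΓ (mcs_U_refl hΓ p) (mcs_U_falsum_imp hΓ χ) (mcs_U_refl hΓ q) h

/-! ### bigStep helpers -/

lemma Model.bigStep_append {Act : Type} (M : Model Act) :
    ∀ (σ1 σ2 : List Act) (s t : M.S),
      M.bigStep (σ1 ++ σ2) s t ↔ ∃ u, M.bigStep σ1 s u ∧ M.bigStep σ2 u t
  | [], σ2, s, t => by simp [Model.bigStep]
  | a :: σ1, σ2, s, t => by
      simp only [List.cons_append, Model.bigStep]
      constructor
      · rintro ⟨u, h1, h2⟩
        obtain ⟨v, h2, h3⟩ := (M.bigStep_append σ1 σ2 u t).1 h2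
        exact ⟨v, ⟨u, h1, h2⟩, h3⟩
      · rintro ⟨v, ⟨u, h1, h2⟩, h3⟩
        exact ⟨u, h1, (M.bigStep_append σ1 σ2 u t).2 ⟨v, h2, h3⟩⟩

lemma take_succ_get {α : Type} (l : List α) (i : ℕ) (h : i < l.length) :
    l.take (i+1) = l.take i ++ [l.get ⟨i, h⟩] := by
  rw [List.take_succ]
  simp [List.getElem?_eq_getElem h]

lemma bigStep_take_succ {Act : Type} (M : Model Act) (σ : List Act) (i : ℕ)
    (h : i < σ.length) (w t : M.S) :
    M.bigStep (σ.take (i+1)) w t ↔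
      ∃ u, M.bigStep (σ.take i) w u ∧ M.R (σ.get ⟨i, h⟩) u t := by
  rw [take_succ_get σ i h, M.bigStep_append]
  simp [Model.bigStep]

/-! ### Canonical model helpers -/

open Formula

lemma sig_one {Γ : Set Formula} {p q : Formula}
    (h : CanAct.one p q ∈ SigmaGamma Γ) : khm p Formula.falsum q ∈ Γ := by
  rcases h with ⟨p', q', heq, hm⟩ | ⟨c', p', q', heq, hm⟩
  · cases heq; exact hm
  · cases heq

lemma sig_two {Γ : Set Formula} {c p q : Formula}
    (h : CanAct.two c p q ∈ SigmaGamma Γ) :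
    khm p c q ∈ Γ ∧ (khm p Formula.falsum q).neg ∈ Γ := by
  rcases h with ⟨p', q', heq, hm⟩ | ⟨c', p', q', heq, hm⟩
  · cases heq
  · cases heq; exact hm

lemma mcs_khm_emp {Γ : Set Formula} (hΓ : MCS Γ) {p q : Formula}
    (h : U (p.imp q) ∈ Γ) : khm p Formula.falsum q ∈ Γ :=
  mcs_mp_deriv hΓ (Deriv.empKhm p q) h

lemma top_mem {Δ : Set Formula} (hΔ : MCS Δ) : Formula.top ∈ Δ :=
  mcs_mem_of_deriv hΔ (Deriv.taut fun v => evalB_top v)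

lemma khm_tt {Γ : Set Formula} (hΓ : MCS Γ) :
    khm Formula.top Formula.falsum Formula.top ∈ Γ :=
  mcs_khm_emp hΓ (mcs_U_refl hΓ Formula.top)

lemma khm_ttt {Γ : Set Formula} (hΓ : MCS Γ) :
    khm Formula.top Formula.falsum (Formula.top.and Formula.top) ∈ Γ :=
  mcs_khm_emp hΓ (mcs_U_of_deriv hΓ (Deriv.taut (by
    intro v
    simp only [evalB_imp_true, evalB_and_true, evalB_top]
    tauto)))

lemma topState_mem {Γ Δ : Set Formula} (hΓ : MCS Γ) (hΔ : Δ ∈ PhiGamma Γ) :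
    (Δ, Formula.top, Formula.top) ∈ CanStates Γ :=
  ⟨hΔ, top_mem hΔ.1, Or.inr (Or.inl ⟨_, _, rfl, khm_tt hΓ⟩)⟩

lemma topAndState_mem {Γ Δ : Set Formula} (hΓ : MCS Γ) (hΔ : Δ ∈ PhiGamma Γ) :
    (Δ, Formula.top.and Formula.top, Formula.top) ∈ CanStates Γ :=
  ⟨hΔ, mcs_and_intro hΔ.1 (top_mem hΔ.1) (top_mem hΔ.1),
    Or.inr (Or.inl ⟨_, _, rfl, khm_ttt hΓ⟩)⟩

lemma oneState_mem {Γ Δ : Set Formula} {p q : Formula} (hΔ : Δ ∈ PhiGamma Γ)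
    (hq : q ∈ Δ) (hσ : CanAct.one p q ∈ SigmaGamma Γ) :
    (Δ, q, p) ∈ CanStates Γ :=
  ⟨hΔ, hq, Or.inr hσ⟩

lemma canR_one {Γ : Set Formula} {a : {a : CanAct // a ∈ SigmaGamma Γ}}
    {p q : Formula} (ha : a.1 = CanAct.one p q) (w w' : (canonicalModel Γ).S) :
    (canonicalModel Γ).R a w w' ↔ (p ∈ w.1.1 ∧ w'.1.2 = (q, p)) := by
  show (match a.1 with
    | CanAct.one ψ φ => ψ ∈ w.1.1 ∧ w'.1.2 = (φ, ψ)
    | CanAct.two χ ψ φ => w.1.2 = (χ, ψ) ∧ φ ∈ w'.1.1) ↔ _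
  rw [ha]

lemma canR_two {Γ : Set Formula} {a : {a : CanAct // a ∈ SigmaGamma Γ}}
    {c p q : Formula} (ha : a.1 = CanAct.two c p q) (w w' : (canonicalModel Γ).S) :
    (canonicalModel Γ).R a w w' ↔ (w.1.2 = (c, p) ∧ q ∈ w'.1.1) := by
  show (match a.1 with
    | CanAct.one ψ φ => ψ ∈ w.1.1 ∧ w'.1.2 = (φ, ψ)
    | CanAct.two χ ψ φ => w.1.2 = (χ, ψ) ∧ φ ∈ w'.1.1) ↔ _
  rw [ha]

lemma top_ne_topAnd : Formula.top ≠ Formula.top.and Formula.top := by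
  intro h
  cases h

end Toolkit
/-- for a non-empty sequence `σ = a₁⋯aₙ ∈ Σ_Γ*` (each `aᵢ` of the
form `⟨ψᵢ,⊥,φᵢ⟩` or `⟨χᵢ^{ψᵢ},φᵢ⟩`, with `φᵢ = aᵢ.post`), if for every
`ψ`-state `w` of the canonical model (1) `σ` is strongly executable at `w` and
(2) `w →σ_j t'` implies `χ ∈ L(t')` for all `1 ≤ j < n`, then
`Khm(ψ,χ,φᵢ) ∈ Γ` for all `1 ≤ i ≤ n`. -/
theorem phi_n (Γ : Set Formula) (hΓ : MCS Γ)
    (σ : List {a : CanAct // a ∈ SigmaGamma Γ}) (hne : σ ≠ []) (ψ χ : Formula)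
    (h : ∀ w : (canonicalModel Γ).S, ψ ∈ w.1.1 →
      (canonicalModel Γ).stronglyExec σ w ∧
      ∀ j, 1 ≤ j → j < σ.length → ∀ t' : (canonicalModel Γ).S,
        (canonicalModel Γ).bigStep (σ.take j) w t' → χ ∈ t'.1.1) :
    ∀ i (hi : i < σ.length),
      Formula.khm ψ χ ((σ.get ⟨i, hi⟩).1.post) ∈ Γ := by
  classical
  rcases em (∃ Δ ∈ PhiGamma Γ, ψ ∈ Δ) with hex | hex
  · -- there is a ψ-MCS in Φ_Γ
    obtain ⟨Δ0, hΔ0, hψΔ0⟩ := hex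
    -- the distinguished ψ-state
    have w0 : (canonicalModel Γ).S :=
      ⟨(Δ0, Formula.top, Formula.top), topState_mem hΓ hΔ0⟩
    -- C1 : nonemptiness of each reachability level
    have reach_ne : ∀ i, i ≤ σ.length → ∃ t w : (canonicalModel Γ).S,
        ψ ∈ w.1.1 ∧ (canonicalModel Γ).bigStep (σ.take i) w t := by
      intro i
      induction i with
      | zero =>
          intro _
          exact ⟨⟨(Δ0, Formula.top, Formula.top), topState_mem hΓ hΔ0⟩,
            ⟨(Δ0, Formula.top, Formula.top), topState_mem hΓ hΔ0⟩, hψΔ0, rfl⟩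
      | succ i ih =>
          intro h1
          have hi : i < σ.length := h1
          obtain ⟨t, w, hψw, hbs⟩ := ih (Nat.le_of_lt hi)
          obtain ⟨u, hu⟩ := (h w hψw).1 i hi t hbs
          refine ⟨u, w, hψw, ?_⟩
          rw [bigStep_take_succ (canonicalModel Γ) σ i hi]
          exact ⟨t, hbs, hu⟩
    -- executability forces the precondition of a type-one action
    have entry : ∀ i (hi : i < σ.length) p q,
        (σ.get ⟨i, hi⟩).1 = CanAct.one p q →
        ∀ (t w : (canonicalModel Γ).S), ψ ∈ w.1.1 →
          (canonicalModel Γ).bigStep (σ.take i) w t → p ∈ t.1.1 := by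
      intro i hi p q hA t w hψw hbs
      obtain ⟨u, hu⟩ := (h w hψw).1 i hi t hbs
      exact ((canR_one hA t u).1 hu).1
    -- executability forces the marker before a type-two action
    have mark2 : ∀ i (hi : i < σ.length) c p q,
        (σ.get ⟨i, hi⟩).1 = CanAct.two c p q →
        ∀ (t w : (canonicalModel Γ).S), ψ ∈ w.1.1 →
          (canonicalModel Γ).bigStep (σ.take i) w t → t.1.2 = (c, p) := by
      intro i hi c p q hA t w hψw hbs
      obtain ⟨u, hu⟩ := (h w hψw).1 i hi t hbs
      exact ((canR_two hA t u).1 hu).1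
    -- every state with the right marker is reached after a type-one action
    have reach_succ_one : ∀ i (hi : i < σ.length) p q,
        (σ.get ⟨i, hi⟩).1 = CanAct.one p q →
        ∀ (t : (canonicalModel Γ).S), t.1.2 = (q, p) →
          ∃ w : (canonicalModel Γ).S, ψ ∈ w.1.1 ∧
            (canonicalModel Γ).bigStep (σ.take (i+1)) w t := by
      intro i hi p q hA t ht
      obtain ⟨t0, w, hψw, hbs⟩ := reach_ne i (Nat.le_of_lt hi)
      obtain ⟨u, hu⟩ := (h w hψw).1 i hi t0 hbs
      have hp : p ∈ t0.1.1 := ((canR_one hA t0 u).1 hu).1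
      refine ⟨w, hψw, ?_⟩
      rw [bigStep_take_succ (canonicalModel Γ) σ i hi]
      exact ⟨t0, hbs, (canR_one hA t0 t).2 ⟨hp, ht⟩⟩
    -- every state satisfying the postcondition is reached after a type-two action
    have reach_succ_two : ∀ i (hi : i < σ.length) c p q,
        (σ.get ⟨i, hi⟩).1 = CanAct.two c p q →
        ∀ (t : (canonicalModel Γ).S), q ∈ t.1.1 →
          ∃ w : (canonicalModel Γ).S, ψ ∈ w.1.1 ∧
            (canonicalModel Γ).bigStep (σ.take (i+1)) w t := by
      intro i hi c p q hA t ht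
      obtain ⟨t0, w, hψw, hbs⟩ := reach_ne i (Nat.le_of_lt hi)
      obtain ⟨u, hu⟩ := (h w hψw).1 i hi t0 hbs
      have hm : t0.1.2 = (c, p) := ((canR_two hA t0 u).1 hu).1
      refine ⟨w, hψw, ?_⟩
      rw [bigStep_take_succ (canonicalModel Γ) σ i hi]
      exact ⟨t0, hbs, (canR_two hA t0 t).2 ⟨hm, ht⟩⟩
    -- every MCS containing `post aᵢ` appears as a state reached after `aᵢ`
    have reach_mem : ∀ i (hi : i < σ.length) Δ (hΔ : Δ ∈ PhiGamma Γ),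
        (σ.get ⟨i, hi⟩).1.post ∈ Δ →
        ∃ t w : (canonicalModel Γ).S, t.1.1 = Δ ∧ ψ ∈ w.1.1 ∧
          (canonicalModel Γ).bigStep (σ.take (i+1)) w t := by
      intro i hi Δ hΔ hpost
      cases hA : (σ.get ⟨i, hi⟩).1 with
      | one p q =>
          have hq : q ∈ Δ := by rw [hA] at hpost; exact hpost
          have hσm : CanAct.one p q ∈ SigmaGamma Γ := by
            rw [← hA]; exact (σ.get ⟨i, hi⟩).2
          obtain ⟨w, hψw, hbs⟩ := reach_succ_one i hi p q hA
            ⟨(Δ, q, p), oneState_mem hΔ hq hσm⟩ rfl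
          exact ⟨_, w, rfl, hψw, hbs⟩
      | two c p q =>
          have hq : q ∈ Δ := by rw [hA] at hpost; exact hpost
          obtain ⟨w, hψw, hbs⟩ := reach_succ_two i hi c p q hA
            ⟨(Δ, Formula.top, Formula.top), topState_mem hΓ hΔ⟩ hq
          exact ⟨_, w, rfl, hψw, hbs⟩
    -- condition (2) in axiomatic form
    have hchiU : ∀ j (hj1 : 1 ≤ j) (hj : j < σ.length) (hj' : j - 1 < σ.length),
        Formula.U (((σ.get ⟨j-1, hj'⟩).1.post).imp χ) ∈ Γ := by
      intro j hj1 hj hj'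
      apply mcs_U_imp_intro hΓ
      intro Δ hΔ hpost
      obtain ⟨t, w, hLt, hψw, hbs⟩ := reach_mem (j-1) hj' Δ hΔ hpost
      have e : j - 1 + 1 = j := by omega
      rw [e] at hbs
      have := (h w hψw).2 j hj1 hj t hbs
      exact hLt ▸ this
    -- a type-two action is always preceded by a matching type-one action
    have two_shape : ∀ i (hi : i < σ.length) (hi' : i - 1 < σ.length) c p q,
        (σ.get ⟨i, hi⟩).1 = CanAct.two c p q →
        0 < i ∧ (σ.get ⟨i-1, hi'⟩).1 = CanAct.one p c := by
      intro i hi hi' c p q hA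
      rcases Nat.eq_zero_or_pos i with rfl | hip
      · exfalso
        have h1 := mark2 0 hi c p q hA
          ⟨(Δ0, Formula.top, Formula.top), topState_mem hΓ hΔ0⟩
          ⟨(Δ0, Formula.top, Formula.top), topState_mem hΓ hΔ0⟩ hψΔ0 rfl
        have h2 := mark2 0 hi c p q hA
          ⟨(Δ0, Formula.top.and Formula.top, Formula.top), topAndState_mem hΓ hΔ0⟩
          ⟨(Δ0, Formula.top.and Formula.top, Formula.top), topAndState_mem hΓ hΔ0⟩ hψΔ0 rfl
        exact top_ne_topAnd (congrArg Prod.fst (h1.trans h2.symm))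
      refine ⟨hip, ?_⟩
      cases hB : (σ.get ⟨i-1, hi'⟩).1 with
      | one p' q' =>
          obtain ⟨t, w, hψw, hbs⟩ := reach_ne i (Nat.le_of_lt hi)
          have e : i - 1 + 1 = i := by omega
          have hbs' : (canonicalModel Γ).bigStep (σ.take (i-1+1)) w t := by
            rw [e]; exact hbs
          rw [bigStep_take_succ (canonicalModel Γ) σ (i-1) hi'] at hbs'
          obtain ⟨u, hbu, hR⟩ := hbs'
          have hm1 : t.1.2 = (q', p') := ((canR_one hB u t).1 hR).2
          have hm2 : t.1.2 = (c, p) := mark2 i hi c p q hA t w hψw hbs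
          have heq := hm1.symm.trans hm2
          have e1 : q' = c := congrArg Prod.fst heq
          have e2 : p' = p := congrArg Prod.snd heq
          rw [e1, e2]
      | two c' p' q' =>
          exfalso
          obtain ⟨t, w, hψw, hbs⟩ := reach_ne i (Nat.le_of_lt hi)
          have e : i - 1 + 1 = i := by omega
          have hbs' : (canonicalModel Γ).bigStep (σ.take (i-1+1)) w t := by
            rw [e]; exact hbs
          rw [bigStep_take_succ (canonicalModel Γ) σ (i-1) hi'] at hbs'
          obtain ⟨u, hbu, hR⟩ := hbs'
          have hq' : q' ∈ t.1.1 := ((canR_two hB u t).1 hR).2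
          have hΦt : t.1.1 ∈ PhiGamma Γ := t.2.1
          obtain ⟨w1, hψw1, hbs1⟩ := reach_succ_two (i-1) hi' c' p' q' hB
            ⟨(t.1.1, Formula.top, Formula.top), topState_mem hΓ hΦt⟩ hq'
          obtain ⟨w2, hψw2, hbs2⟩ := reach_succ_two (i-1) hi' c' p' q' hB
            ⟨(t.1.1, Formula.top.and Formula.top, Formula.top), topAndState_mem hΓ hΦt⟩ hq'
          rw [e] at hbs1 hbs2
          have hm1 := mark2 i hi c p q hA _ w1 hψw1 hbs1
          have hm2 := mark2 i hi c p q hA _ w2 hψw2 hbs2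
          exact top_ne_topAnd (congrArg Prod.fst (hm1.trans hm2.symm))
    -- main induction
    intro i
    induction i using Nat.strong_induction_on with
    | _ i IH =>
      intro hi
      have hprev : i - 1 < σ.length := Nat.lt_of_le_of_lt (Nat.sub_le i 1) hi
      cases hA : (σ.get ⟨i, hi⟩).1 with
      | one p q =>
          have hkhm : Formula.khm p Formula.falsum q ∈ Γ := by
            apply sig_one
            rw [← hA]; exact (σ.get ⟨i, hi⟩).2
          show Formula.khm ψ χ q ∈ Γ
          rcases Nat.eq_zero_or_pos i with rfl | hip
          · have hU : Formula.U (ψ.imp p) ∈ Γ := by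
              apply mcs_U_imp_intro hΓ
              intro Δ hΔ hψΔ
              exact entry 0 hi p q hA
                ⟨(Δ, Formula.top, Formula.top), topState_mem hΓ hΔ⟩
                ⟨(Δ, Formula.top, Formula.top), topState_mem hΓ hΔ⟩ hψΔ rfl
            exact mcs_khm_weaken hΓ hU (mcs_U_falsum_imp hΓ χ) (mcs_U_refl hΓ q) hkhm
          · have hUr : Formula.U (((σ.get ⟨i-1, hprev⟩).1.post).imp p) ∈ Γ := by
              apply mcs_U_imp_intro hΓ
              intro Δ hΔ hpost
              obtain ⟨t, w, hLt, hψw, hbs⟩ := reach_mem (i-1) hprev Δ hΔ hpost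
              have e : i - 1 + 1 = i := by omega
              rw [e] at hbs
              exact hLt ▸ entry i hi p q hA t w hψw hbs
            have h1 : Formula.khm ((σ.get ⟨i-1, hprev⟩).1.post) χ q ∈ Γ :=
              mcs_khm_weaken hΓ hUr (mcs_U_falsum_imp hΓ χ) (mcs_U_refl hΓ q) hkhm
            have h2 : Formula.khm ψ χ ((σ.get ⟨i-1, hprev⟩).1.post) ∈ Γ :=
              IH (i-1) (by omega) hprev
            have h3 := hchiU i hip hi hprev
            exact mcs_khm_comp hΓ h2 h1 h3
      | two c p q =>
          have hsig : Formula.khm p c q ∈ Γ := by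
            refine (sig_two ?_).1
            rw [← hA]; exact (σ.get ⟨i, hi⟩).2
          show Formula.khm ψ χ q ∈ Γ
          obtain ⟨hip, hone⟩ := two_shape i hi hprev c p q hA
          have hpostprev : (σ.get ⟨i-1, hprev⟩).1.post = c := by rw [hone]; rfl
          have hUc : Formula.U (c.imp χ) ∈ Γ := by
            have hx := hchiU i hip hi hprev
            rw [hpostprev] at hx
            exact hx
          have h1 : Formula.khm p χ q ∈ Γ :=
            mcs_khm_weaken hΓ (mcs_U_refl hΓ p) hUc (mcs_U_refl hΓ q) hsig
          by_cases hi1 : i = 1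
          · subst hi1
            have hU : Formula.U (ψ.imp p) ∈ Γ := by
              apply mcs_U_imp_intro hΓ
              intro Δ hΔ hψΔ
              exact entry (1-1) hprev p c hone
                ⟨(Δ, Formula.top, Formula.top), topState_mem hΓ hΔ⟩
                ⟨(Δ, Formula.top, Formula.top), topState_mem hΓ hΔ⟩ hψΔ rfl
            exact mcs_khm_weaken hΓ hU (mcs_U_refl hΓ χ) (mcs_U_refl hΓ q) h1
          · have hi2 : 2 ≤ i := by omega
            have hpp : i - 1 - 1 < σ.length := by omega
            have hUr : Formula.U (((σ.get ⟨i-1-1, hpp⟩).1.post).imp p) ∈ Γ := by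
              apply mcs_U_imp_intro hΓ
              intro Δ hΔ hpost
              obtain ⟨t, w, hLt, hψw, hbs⟩ := reach_mem (i-1-1) hpp Δ hΔ hpost
              have e : i - 1 - 1 + 1 = i - 1 := by omega
              rw [e] at hbs
              exact hLt ▸ entry (i-1) hprev p c hone t w hψw hbs
            have h1' : Formula.khm ((σ.get ⟨i-1-1, hpp⟩).1.post) χ q ∈ Γ :=
              mcs_khm_weaken hΓ hUr (mcs_U_refl hΓ χ) (mcs_U_refl hΓ q) h1
            have h2 : Formula.khm ψ χ ((σ.get ⟨i-1-1, hpp⟩).1.post) ∈ Γ :=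
              IH (i-1-1) (by omega) hpp
            have h3 : Formula.U (((σ.get ⟨i-1-1, hpp⟩).1.post).imp χ) ∈ Γ :=
              hchiU (i-1) (by omega) hprev hpp
            exact mcs_khm_comp hΓ h2 h1' h3
  · -- no ψ-state : vacuous case via EMPKhm
    intro i hi
    have hU : Formula.U (ψ.imp ((σ.get ⟨i, hi⟩).1.post)) ∈ Γ :=
      mcs_U_imp_intro hΓ (fun Δ hΔ hψΔ => absurd ⟨Δ, hΔ, hψΔ⟩ hex)
    exact mcs_khm_chi hΓ χ (mcs_khm_emp hΓ hU)
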